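/- Let p be an odd prime, F = Z/pZ, and let G = ⟨{a} ∪ {b^(j)_i}⟩ ∈ 𝒞 be a just infinite generalised multi-edge spinal group in standard form, and suppose that for b = b^(1)_1 the subgroup ⟨a, b⟩ is a generalised Gupta–Sidki group, i.e. ψ₁(b) = (a^{e₁},…,a^{e_{p−1}}, b) with {e₁,…,e_{p−1}} = {1,2,…,p−1} as subsets of Z/pZ. Then, identifying group elements with their images in the tree enveloping algebra 𝔄_G, the element 1 + b·a_* is not invertible in 𝔄_G, where a_* = (a−1)^{p−1} = 1 + a + ⋯ + a^{p−1}. -/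

import Mathlib

/-!
If `1 + b a_*` were invertible, some finitely supported `v : ∂T →₀ 𝔽_p` would solve
`(1 + b a_*) v = δ`, where `δ` is the indicator of the spine `ccc…` of `b`. Reading this equation
on the subtrees of the first level expresses `v` through `P v (ρ) = ∑_y v (y ρ)`, and shows that
`P v` solves the same equation for `b⁻¹`. Off the spine, `b` has sections `a^{e_k}` whose
exponents run over all non-zero residues, so every point of `supp (P v)` yields `p - 1 ≥ 2`
distinct points of `supp v`. Since a solution is never `0`, the support sizes would descend
forever.
-/

set_option synthInstance.maxHeartbeats 1000000
set_option maxHeartbeats 1000000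

namespace GMS

abbrev Vtx (p : ℕ) := List (Fin p)

def applyP {p : ℕ} : (Vtx p → Equiv.Perm (Fin p)) → Vtx p → Vtx p
  | _, [] => []
  | f, x :: ω => f [] x :: applyP (fun τ => f (x :: τ)) ω

def invApplyP {p : ℕ} : (Vtx p → Equiv.Perm (Fin p)) → Vtx p → Vtx p
  | _, [] => []
  | f, y :: ω => (f []).symm y :: invApplyP (fun τ => f ((f []).symm y :: τ)) ω

theorem applyP_invApplyP {p : ℕ} (f : Vtx p → Equiv.Perm (Fin p)) (ω : Vtx p) :
    applyP f (invApplyP f ω) = ω := by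
  induction ω generalizing f with
  | nil => rfl
  | cons y ω ih => simp [applyP, invApplyP, ih]

theorem invApplyP_applyP {p : ℕ} (f : Vtx p → Equiv.Perm (Fin p)) (ω : Vtx p) :
    invApplyP f (applyP f ω) = ω := by
  induction ω generalizing f with
  | nil => rfl
  | cons x ω ih => simp [applyP, invApplyP, ih]

def toPerm {p : ℕ} (f : Vtx p → Equiv.Perm (Fin p)) : Equiv.Perm (Vtx p) :=
  ⟨applyP f, invApplyP f, invApplyP_applyP f, applyP_invApplyP f⟩

def treeAut (p : ℕ) : Subgroup (Equiv.Perm (Vtx p)) where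
  carrier := {f | ∀ ω ω' : Vtx p, ω <+: ω' → f ω <+: f ω' ∧ f.symm ω <+: f.symm ω'}
  one_mem' := fun _ _ h => ⟨h, h⟩
  mul_mem' := by
    intro f g hf hg ω ω' h
    exact ⟨(hf _ _ (hg _ _ h).1).1, (hg _ _ (hf _ _ h).2).2⟩
  inv_mem' := by
    intro f hf ω ω' h
    exact ⟨(hf _ _ h).2, (hf _ _ h).1⟩

theorem applyP_append {p : ℕ} (f : Vtx p → Equiv.Perm (Fin p)) (ω t : Vtx p) :
    applyP f (ω ++ t) = applyP f ω ++ applyP (fun τ => f (ω ++ τ)) t := by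
  induction ω generalizing f with
  | nil => rfl
  | cons x ω ih => simp [applyP, ih]

theorem invApplyP_append {p : ℕ} (f : Vtx p → Equiv.Perm (Fin p)) (ω t : Vtx p) :
    invApplyP f (ω ++ t) =
      invApplyP f ω ++ invApplyP (fun τ => f (invApplyP f ω ++ τ)) t := by
  induction ω generalizing f with
  | nil => rfl
  | cons x ω ih => simp [invApplyP, ih]

theorem toPerm_mem_treeAut {p : ℕ} (f : Vtx p → Equiv.Perm (Fin p)) :
    toPerm f ∈ treeAut p := by
  intro ω ω' h
  obtain ⟨t, rfl⟩ := h
  exact ⟨⟨_, (applyP_append f ω t).symm⟩, ⟨_, (invApplyP_append f ω t).symm⟩⟩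

/-- The `p`-cycle `x ↦ x + 1` on `Fin p`. -/
def rootCycle (p : ℕ) [NeZero p] : Equiv.Perm (Fin p) := Equiv.addRight 1

/-- The rooted automorphism `a`, cyclically permuting the first-level subtrees. -/
def aAut (p : ℕ) [NeZero p] : Equiv.Perm (Vtx p) :=
  toPerm (fun ω => if ω = [] then rootCycle p else 1)

/-- Conversion of a non-zero residue position to an index in `Fin (p-1)`. -/
def offIdx {p : ℕ} (hp1 : 1 < p) (k : Fin p) : Fin (p - 1) :=
  ⟨k.val - 1, by have := k.isLt; omega⟩

/-- The portrait of a directed automorphism with directing path `c, cc, ccc, …` and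
defining vector `e`: its section at the first-level vertex `c` is itself, and its
section at a first-level vertex `c + k` (for `k ≠ 0`) is `a^{e_k}`. -/
def dirPort {p : ℕ} [NeZero p] (hp1 : 1 < p) (c : Fin p) (e : Fin (p - 1) → ZMod p) :
    Vtx p → Equiv.Perm (Fin p)
  | [] => 1
  | [x] => if x = c then 1 else rootCycle p ^ (e (offIdx hp1 (x - c))).val
  | x :: y :: ω => if x = c then dirPort hp1 c e (y :: ω) else 1

/-- The directed automorphism with directing path `c, cc, ccc, …` and defining
vector `e`; it satisfies `ψ₁(b) = (…, a^{e_k} at position c + k, …, b at position c, …)`. -/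
def dirAut {p : ℕ} [NeZero p] (hp1 : 1 < p) (c : Fin p) (e : Fin (p - 1) → ZMod p) :
    Equiv.Perm (Vtx p) :=
  toPerm (dirPort hp1 c e)

/-- Defining data for a generalised multi-edge spinal group in standard form:
for each `j`, an `r j`-tuple of linearly independent defining vectors in `(ℤ/pℤ)^{p-1}`. -/
structure SpinalData (p : ℕ) where
  r : Fin p → ℕ
  r_le : ∀ j, r j ≤ p - 1
  r_ne : ∃ j, r j ≠ 0
  e : (j : Fin p) → Fin (r j) → Fin (p - 1) → ZMod p
  indep : ∀ j, LinearIndependent (ZMod p) (e j)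

/-- The directing-path letter of the `j`-th family (`j` is 0-indexed; the paper's
family `j+1` is directed along the constant path with letter `p - j - 1`). -/
def pathLetter {p : ℕ} [NeZero p] (j : Fin p) : Fin p := -(j + 1)

/-- The directed generator `b^{(j)}_i`. -/
def SpinalData.gen {p : ℕ} [NeZero p] (D : SpinalData p) (hp1 : 1 < p)
    (j : Fin p) (i : Fin (D.r j)) : Equiv.Perm (Vtx p) :=
  dirAut hp1 (pathLetter j) (D.e j i)

/-- The generating set `{a} ∪ {b^{(j)}_i}`. -/
def SpinalData.genSet {p : ℕ} [NeZero p] (D : SpinalData p) (hp1 : 1 < p) :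
    Set (Equiv.Perm (Vtx p)) :=
  insert (aAut p) {g | ∃ j i, g = D.gen hp1 j i}

/-- The generalised multi-edge spinal group in standard form associated to `D`. -/
def SpinalData.grp {p : ℕ} [NeZero p] (D : SpinalData p) (hp1 : 1 < p) :
    Subgroup (Equiv.Perm (Vtx p)) :=
  Subgroup.closure (D.genSet hp1)

theorem aAut_mem_grp {p : ℕ} [NeZero p] (D : SpinalData p) (hp1 : 1 < p) :
    aAut p ∈ D.grp hp1 :=
  Subgroup.subset_closure (Set.mem_insert _ _)

theorem gen_mem_grp {p : ℕ} [NeZero p] (D : SpinalData p) (hp1 : 1 < p)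
    (j : Fin p) (i : Fin (D.r j)) : D.gen hp1 j i ∈ D.grp hp1 :=
  Subgroup.subset_closure (Set.mem_insert_iff.mpr (Or.inr ⟨j, i, rfl⟩))

/-- `ψ₁(g) = (s 0, …, s (p-1))`: the element `g` stabilises the first level and has
section `s x` at the first-level vertex `x`. -/
def hasSections {p : ℕ} (g : Equiv.Perm (Vtx p)) (s : Fin p → Equiv.Perm (Vtx p)) : Prop :=
  ∀ (x : Fin p) (τ : Vtx p), g (x :: τ) = x :: s x τ

/-- `g` fixes the vertex `u` and acts on the subtree rooted at `u` as `s` (under the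
natural identification of the subtree with the whole tree). -/
def sectionAt {p : ℕ} (u : Vtx p) (g s : Equiv.Perm (Vtx p)) : Prop :=
  ∀ τ : Vtx p, g (u ++ τ) = u ++ s τ

/-- The pointwise stabiliser of the `n`-th level of the tree. -/
def levelStab (p : ℕ) (n : ℕ) : Subgroup (Equiv.Perm (Vtx p)) where
  carrier := {g | ∀ ω : Vtx p, ω.length = n → g ω = ω}
  one_mem' := fun _ _ => rfl
  mul_mem' := by
    intro f g hf hg ω hω
    have := hg ω hω
    simp only [Equiv.Perm.mul_apply, this]
    exact hf ω hω
  inv_mem' := by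
    intro f hf ω hω
    have := hf ω hω
    calc f⁻¹ ω = f⁻¹ (f ω) := by rw [this]
    _ = ω := f.symm_apply_apply ω

/-- Spherical transitivity: `G` acts transitively on every level of the tree. -/
def SphericallyTransitive (p : ℕ) (G : Subgroup (Equiv.Perm (Vtx p))) : Prop :=
  ∀ ω ω' : Vtx p, ω.length = ω'.length → ∃ g ∈ G, g ω = ω'

/-- `G` is fractal: it is spherically transitive and for every vertex `u`, the
restriction to the subtree rooted at `u` of the stabiliser of `u` in `G` is `G` itself. -/
def Fractal (p : ℕ) (G : Subgroup (Equiv.Perm (Vtx p))) : Prop :=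
  SphericallyTransitive p G ∧
    ∀ (u : Vtx p) (s : Equiv.Perm (Vtx p)), s ∈ G ↔ ∃ g ∈ G, sectionAt u g s

/-- `G` is regular branch over `K`: `G` is fractal, `K` is a non-trivial subgroup of
`Stab_G(1)` of finite index in `G`, and `K × ⋯ × K ⊆ ψ₁(K)`. -/
def RegularBranch (p : ℕ) (G K : Subgroup (Equiv.Perm (Vtx p))) : Prop :=
  Fractal p G ∧ K ≠ ⊥ ∧ K ≤ G ⊓ levelStab p 1 ∧ K.relIndex G ≠ 0 ∧
    ∀ s : Fin p → Equiv.Perm (Vtx p), (∀ x, s x ∈ K) → ∃ g ∈ K, hasSections g s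

/-- The third term `γ₃(H) = [[H,H],H]` of the lower central series. -/
def gamma3 {Γ : Type*} [Group Γ] (H : Subgroup Γ) : Subgroup Γ := ⁅(⁅H, H⁆ : Subgroup Γ), H⁆

/-- Rigid stabiliser (in the full permutation group) of the vertex `u`: permutations
fixing every vertex not having `u` as a prefix. -/
def rigidStab (p : ℕ) (u : Vtx p) : Subgroup (Equiv.Perm (Vtx p)) where
  carrier := {g | ∀ ω : Vtx p, ¬ u <+: ω → g ω = ω}
  one_mem' := fun _ _ => rfl
  mul_mem' := by
    intro f g hf hg ω hω
    have := hg ω hω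
    simp only [Equiv.Perm.mul_apply, this]
    exact hf ω hω
  inv_mem' := by
    intro f hf ω hω
    have := hf ω hω
    calc f⁻¹ ω = f⁻¹ (f ω) := by rw [this]
    _ = ω := f.symm_apply_apply ω

/-- The rigid `n`-th level stabiliser of `G`: the subgroup generated by (equivalently,
the product of) the rigid vertex stabilisers of the vertices at level `n`. -/
def rigidLevelStab (p : ℕ) (G : Subgroup (Equiv.Perm (Vtx p))) (n : ℕ) :
    Subgroup (Equiv.Perm (Vtx p)) :=
  ⨆ u ∈ {u : Vtx p | u.length = n}, (G ⊓ rigidStab p u)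

/-- `G` is a branch group (with respect to its action on the regular rooted tree). -/
def Branch (p : ℕ) (G : Subgroup (Equiv.Perm (Vtx p))) : Prop :=
  SphericallyTransitive p G ∧ ∀ n : ℕ, (rigidLevelStab p G n).relIndex G ≠ 0

/-- An infinite group all of whose proper quotients are finite. -/
def JustInfinite {Γ : Type*} [Group Γ] (G : Subgroup Γ) : Prop :=
  (G : Set Γ).Infinite ∧
    ∀ N : Subgroup ↥G, N.Normal → N ≠ ⊥ → N.FiniteIndex

/-- The conjugate subgroup `x H x⁻¹`. -/
def conjSub {Γ : Type*} [Group Γ] (x : Γ) (H : Subgroup Γ) : Subgroup Γ :=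
  H.map (MulAut.conj x).toMonoidHom

/-- `M` is a dense subgroup of `G` with respect to the profinite topology on `G`:
`NM = G` for every normal subgroup `N` of `G` of finite index. -/
def DenseIn {Γ : Type*} [Group Γ] (M G : Subgroup Γ) : Prop :=
  M ≤ G ∧ ∀ N : Subgroup Γ, N ≤ G → (N.subgroupOf G).Normal → N.relIndex G ≠ 0 →
    G ≤ N ⊔ M

/-- The restriction to the subtree rooted at `u` of the stabiliser of `u` in `M`
(the "upper companion" subgroup `M_u`), under the identification of the subtree with
the whole tree. -/
def restrAt (p : ℕ) (u : Vtx p) (M : Subgroup (Equiv.Perm (Vtx p))) :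
    Subgroup (Equiv.Perm (Vtx p)) where
  carrier := {s | ∃ g ∈ M, sectionAt u g s}
  one_mem' := ⟨1, M.one_mem, fun τ => rfl⟩
  mul_mem' := by
    rintro s s' ⟨g, hg, hgs⟩ ⟨g', hg', hgs'⟩
    refine ⟨g * g', M.mul_mem hg hg', fun τ => ?_⟩
    simp only [Equiv.Perm.mul_apply, hgs' τ, hgs (s' τ)]
  inv_mem' := by
    rintro s ⟨g, hg, hgs⟩
    refine ⟨g⁻¹, M.inv_mem hg, fun τ => ?_⟩
    have h1 : g (u ++ s⁻¹ τ) = u ++ τ := by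
      rw [hgs (s⁻¹ τ)]
      simp
    calc g⁻¹ (u ++ τ) = g⁻¹ (g (u ++ s⁻¹ τ)) := by rw [h1]
    _ = u ++ s⁻¹ τ := g.symm_apply_apply _

/-- Index `p - i` (`0`-indexed version of `i ↦ p - i` on `{1, …, p-1}`). -/
def revIdx {p : ℕ} (k : Fin (p - 1)) : Fin (p - 1) :=
  ⟨p - 2 - k.val, by have := k.isLt; omega⟩


/-- Non-constancy of a defining vector. -/
def IsNonConstant {p : ℕ} (v : Fin (p - 1) → ZMod p) : Prop :=
  ¬ ∃ α : ZMod p, ∀ k, v k = α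

/-- The regularity condition defining the subclass `𝒞_reg`: every non-empty family
of defining vectors contains a non-constant vector. -/
def SpinalData.IsReg {p : ℕ} (D : SpinalData p) : Prop :=
  ∀ j, D.r j ≠ 0 → ∃ i, IsNonConstant (D.e j i)

/-- Non-symmetry of a defining vector: `e_i ≠ e_{p-i}` for some `i`. -/
def IsNonSymmetric {p : ℕ} (v : Fin (p - 1) → ZMod p) : Prop :=
  ∃ k, v k ≠ v (revIdx k)

/-- Membership in the class `𝒞`: subgroups of `Aut(T)` conjugate to a generalised
multi-edge spinal group in standard form. -/
def inC (p : ℕ) [NeZero p] (hp1 : 1 < p) (G : Subgroup (Equiv.Perm (Vtx p))) : Prop :=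
  ∃ (D : SpinalData p) (x : Equiv.Perm (Vtx p)), x ∈ treeAut p ∧
    G = (D.grp hp1).map (MulAut.conj x).toMonoidHom

/-- Membership in the subclass `𝒞_reg`. -/
def inCreg (p : ℕ) [NeZero p] (hp1 : 1 < p) (G : Subgroup (Equiv.Perm (Vtx p))) : Prop :=
  ∃ (D : SpinalData p) (x : Equiv.Perm (Vtx p)), x ∈ treeAut p ∧ D.IsReg ∧
    G = (D.grp hp1).map (MulAut.conj x).toMonoidHom

theorem apply_nil_of_mem_treeAut {p : ℕ} {f : Equiv.Perm (Vtx p)} (hf : f ∈ treeAut p) :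
    f [] = [] := by
  have h1 : f [] <+: f (f.symm []) := (hf [] (f.symm []) (List.nil_prefix)).1
  rw [f.apply_symm_apply] at h1
  exact List.prefix_nil.mp h1

theorem length_le_of_mem_treeAut {p : ℕ} {f : Equiv.Perm (Vtx p)} (hf : f ∈ treeAut p)
    (ω : Vtx p) : ω.length ≤ (f ω).length := by
  induction ω using List.reverseRecOn with
  | nil => exact Nat.zero_le _
  | append_singleton ω x ih =>
      have h1 : f ω <+: f (ω ++ [x]) := (hf ω (ω ++ [x]) ⟨[x], rfl⟩).1
      have hne : f ω ≠ f (ω ++ [x]) := by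
        intro h
        have := f.injective h
        simp at this
      have h2 : (f ω).length < (f (ω ++ [x])).length :=
        lt_of_le_of_ne h1.length_le (fun h => hne (h1.eq_of_length h))
      simp only [List.length_append, List.length_singleton]
      omega

theorem length_of_mem_treeAut {p : ℕ} {f : Equiv.Perm (Vtx p)} (hf : f ∈ treeAut p)
    (ω : Vtx p) : (f ω).length = ω.length := by
  have h1 := length_le_of_mem_treeAut hf ω
  have h2 := length_le_of_mem_treeAut ((treeAut p).inv_mem hf) (f ω)
  have h3 : (f⁻¹ : Equiv.Perm (Vtx p)) (f ω) = ω := by simp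
  rw [h3] at h2
  omega

/-- The prefix of length `n` of a boundary point (infinite ray). -/
def rayTake {p : ℕ} (ξ : ℕ → Fin p) (n : ℕ) : Vtx p := List.ofFn (fun i : Fin n => ξ i)

theorem rayTake_succ {p : ℕ} (ξ : ℕ → Fin p) (n : ℕ) :
    rayTake ξ (n + 1) = rayTake ξ n ++ [ξ n] := by
  simp only [rayTake, List.ofFn_succ', List.concat_eq_append, Fin.coe_castSucc,
    Fin.val_last]

/-- The induced action of a tree automorphism on the boundary of the tree. -/
def bAct {p : ℕ} [NeZero p] (g : Equiv.Perm (Vtx p)) (ξ : ℕ → Fin p) : ℕ → Fin p :=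
  fun n => (g (rayTake ξ (n + 1))).getD n 0

theorem bAct_rayTake {p : ℕ} [NeZero p] {f : Equiv.Perm (Vtx p)} (hf : f ∈ treeAut p)
    (ξ : ℕ → Fin p) (n : ℕ) : f (rayTake ξ n) = rayTake (bAct f ξ) n := by
  induction n with
  | zero => exact apply_nil_of_mem_treeAut hf
  | succ n ih =>
      have hpre : f (rayTake ξ n) <+: f (rayTake ξ (n + 1)) := by
        refine (hf _ _ ?_).1
        rw [rayTake_succ]
        exact ⟨[ξ n], rfl⟩
      obtain ⟨t, ht⟩ := hpre
      have hlen : t.length = 1 := by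
        have l1 : (f (rayTake ξ n)).length = n := by
          rw [length_of_mem_treeAut hf]; simp [rayTake]
        have l2 : (f (rayTake ξ (n + 1))).length = n + 1 := by
          rw [length_of_mem_treeAut hf]; simp [rayTake]
        have h3 : (f (rayTake ξ n)).length + t.length = (f (rayTake ξ (n+1))).length := by
          rw [← ht]; simp
        omega
      obtain ⟨y, rfl⟩ : ∃ y, t = [y] := by
        match t, hlen with
        | [y], _ => exact ⟨y, rfl⟩
      have hy : bAct f ξ n = y := by
        unfold bAct
        rw [← ht, ih]
        rw [List.getD_append_right]
        · simp [rayTake]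
        · simp [rayTake]
      rw [rayTake_succ (bAct f ξ) n, ← ht, ih, hy]

theorem bAct_one {p : ℕ} [NeZero p] : bAct (1 : Equiv.Perm (Vtx p)) = id := by
  funext ξ n
  simp only [bAct, Equiv.Perm.coe_one, id_eq]
  rw [List.getD_eq_getElem]
  · simp only [rayTake]
    rw [List.getElem_ofFn]
  · simp [rayTake]

theorem bAct_mul {p : ℕ} [NeZero p] {f g : Equiv.Perm (Vtx p)}
    (_hf : f ∈ treeAut p) (hg : g ∈ treeAut p) :
    bAct (f * g) = bAct f ∘ bAct g := by
  funext ξ n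
  simp only [bAct, Function.comp_apply, Equiv.Perm.mul_apply]
  rw [bAct_rayTake hg]


theorem grp_le_treeAut {p : ℕ} [NeZero p] (D : SpinalData p) (hp1 : 1 < p) :
    D.grp hp1 ≤ treeAut p := by
  rw [SpinalData.grp, Subgroup.closure_le]
  intro g hg
  rcases Set.mem_insert_iff.mp hg with rfl | hh
  · exact toPerm_mem_treeAut _
  · obtain ⟨j, i, rfl⟩ := hh
    exact toPerm_mem_treeAut _

/-- The endomorphism algebra `End(F⟨⟨∂T⟩⟩)` of the `𝔽_p`-vector space with basis the
boundary `∂T` of the tree (the set of infinite rays, identified with `ℕ → Fin p`). -/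
def BEnd (p : ℕ) [NeZero p] : Type :=
  Module.End (ZMod p) ((ℕ → Fin p) →₀ ZMod p)

noncomputable instance (p : ℕ) [NeZero p] : Ring (BEnd p) :=
  inferInstanceAs (Ring (Module.End (ZMod p) ((ℕ → Fin p) →₀ ZMod p)))

noncomputable instance (p : ℕ) [NeZero p] : Algebra (ZMod p) (BEnd p) :=
  inferInstanceAs (Algebra (ZMod p) (Module.End (ZMod p) ((ℕ → Fin p) →₀ ZMod p)))

/-- The action of a group of tree automorphisms on the `𝔽_p`-vector space with basis
the boundary of the tree. -/
noncomputable def traRep (p : ℕ) [NeZero p] (G : Subgroup (Equiv.Perm (Vtx p)))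
    (hG : G ≤ treeAut p) : ↥G →* BEnd p where
  toFun g :=
    (Finsupp.lmapDomain (ZMod p) (ZMod p) (bAct (g : Equiv.Perm (Vtx p))) : BEnd p)
  map_one' := by
    show (Finsupp.lmapDomain (ZMod p) (ZMod p)
        (bAct ((1 : ↥G) : Equiv.Perm (Vtx p))) : BEnd p) = 1
    rw [OneMemClass.coe_one, bAct_one]
    exact Finsupp.lmapDomain_id _ _
  map_mul' g h := by
    show (Finsupp.lmapDomain (ZMod p) (ZMod p)
        (bAct ((g * h : ↥G) : Equiv.Perm (Vtx p))) : BEnd p) = _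
    have : bAct ((g * h : ↥G) : Equiv.Perm (Vtx p)) =
        bAct (g : Equiv.Perm (Vtx p)) ∘ bAct (h : Equiv.Perm (Vtx p)) := by
      rw [Subgroup.coe_mul]
      exact bAct_mul (hG g.2) (hG h.2)
    refine LinearMap.ext fun v => ?_
    simp only [Finsupp.lmapDomain_apply, this, Finsupp.mapDomain_comp]
    rfl

/-- The representation `χ : F[G] → End(F⟨⟨∂T⟩⟩)` of the group algebra obtained by
linear extension of the action of `G` on the boundary of the tree. -/
noncomputable def chi (p : ℕ) [NeZero p] (G : Subgroup (Equiv.Perm (Vtx p)))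
    (hG : G ≤ treeAut p) : MonoidAlgebra (ZMod p) ↥G →ₐ[ZMod p] BEnd p :=
  MonoidAlgebra.lift (ZMod p) _ ↥G (traRep p G hG)

/-- The tree enveloping algebra `𝔄_G`: the image of the group algebra `F[G]` under `χ`. -/
noncomputable def TEA (p : ℕ) [NeZero p] (G : Subgroup (Equiv.Perm (Vtx p)))
    (hG : G ≤ treeAut p) : Subalgebra (ZMod p) (BEnd p) :=
  (chi p G hG).range

/-- The augmentation ideal of the group algebra `F[G]`. -/
noncomputable def augMA (p : ℕ) [NeZero p] (G : Subgroup (Equiv.Perm (Vtx p))) :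
    Ideal (MonoidAlgebra (ZMod p) ↥G) :=
  RingHom.ker ((MonoidAlgebra.lift (ZMod p) (ZMod p) ↥G) 1)

/-- The induced augmentation ideal `Aug(𝔄_G)`: the image of the augmentation ideal
of `F[G]` in the tree enveloping algebra. -/
noncomputable def augTEA (p : ℕ) [NeZero p] (G : Subgroup (Equiv.Perm (Vtx p)))
    (hG : G ≤ treeAut p) : Ideal ↥(TEA p G hG) :=
  Ideal.map (chi p G hG).rangeRestrict (augMA p G)

/-- The image in the tree enveloping algebra of a group element `g ∈ G`. -/
noncomputable def elt (p : ℕ) [NeZero p] (G : Subgroup (Equiv.Perm (Vtx p)))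
    (hG : G ≤ treeAut p) (g : ↥G) : ↥(TEA p G hG) :=
  (chi p G hG).rangeRestrict (MonoidAlgebra.of (ZMod p) ↥G g)


theorem sub_one_pow_pred_eq_geom_sum {p : ℕ} [Fact p.Prime] {A : Type*} [Ring A]
    [Algebra (ZMod p) A] (t : A) : (t - 1) ^ (p - 1) = ∑ i ∈ Finset.range p, t ^ i := by
  open Polynomial in
  have hX : ((X : (ZMod p)[X]) - 1) ^ (p - 1) = ∑ i ∈ Finset.range p, X ^ i := by
    refine mul_right_cancel₀ (by simpa using X_sub_C_ne_zero (1 : ZMod p)) ?_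
    rw [geom_sum_mul, ← pow_succ, Nat.sub_add_cancel (Fact.out : p.Prime).one_le, sub_pow_char,
      one_pow]
  simpa using congrArg (Polynomial.aeval t) hX

theorem lmapDomain_pow {R : Type*} [Semiring R] {α : Type*} (f : α → α) (n : ℕ) :
    Finsupp.lmapDomain R R f ^ n = Finsupp.lmapDomain R R f^[n] := by
  induction n with
  | zero => exact (Finsupp.lmapDomain_id R R).symm
  | succ n ih => rw [pow_succ, ih, Function.iterate_succ, Finsupp.lmapDomain_comp]; rfl

section Rays

variable {p : ℕ}

def rayCons (y : Fin p) (ρ : ℕ → Fin p) : ℕ → Fin p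
  | 0 => y
  | n + 1 => ρ n

def rayTail (ξ : ℕ → Fin p) : ℕ → Fin p := fun n => ξ (n + 1)

@[simp] theorem rayCons_zero (y : Fin p) (ρ : ℕ → Fin p) : rayCons y ρ 0 = y := rfl

@[simp] theorem rayTail_rayCons (y : Fin p) (ρ : ℕ → Fin p) : rayTail (rayCons y ρ) = ρ := rfl

@[simp] theorem rayCons_head_rayTail (ξ : ℕ → Fin p) : rayCons (ξ 0) (rayTail ξ) = ξ := by
  funext n; cases n <;> rfl

theorem rayCons_injective2 : Function.Injective2 (rayCons (p := p)) :=
  fun _ _ _ _ h => ⟨congrFun h 0, funext fun n => congrFun h (n + 1)⟩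

theorem rayCons_const (c : Fin p) : rayCons c (Function.const ℕ c) = Function.const ℕ c := by
  funext n; cases n <;> rfl

theorem rayTake_rayCons (y : Fin p) (ρ : ℕ → Fin p) (n : ℕ) :
    rayTake (rayCons y ρ) (n + 1) = y :: rayTake ρ n := by
  simp only [rayTake, List.ofFn_succ, Fin.val_zero, Fin.val_succ]
  rfl

variable [NeZero p]

/-- `a ^ m` acting on `∂T`. -/
def rotateHead (m : Fin p) (ξ : ℕ → Fin p) : ℕ → Fin p := rayCons (ξ 0 + m) (rayTail ξ)

theorem rotateHead_rotateHead (m k : Fin p) (ξ : ℕ → Fin p) :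
    rotateHead m (rotateHead k ξ) = rotateHead (k + m) ξ := by
  simp [rotateHead, add_assoc]

@[simp] theorem rotateHead_zero (ξ : ℕ → Fin p) : rotateHead 0 ξ = ξ := by
  simp [rotateHead]

theorem rotateHead_rotateHead_neg (m : Fin p) (ξ : ℕ → Fin p) :
    rotateHead m (rotateHead (-m) ξ) = ξ := by
  simp [rotateHead_rotateHead]

theorem rotateHead_injective (m : Fin p) : Function.Injective (rotateHead m) := fun ξ ξ' h => by
  simpa [rotateHead_rotateHead] using congrArg (rotateHead (-m)) h

open Fin.NatCast in
theorem iterate_rotateHead_one (n : ℕ) :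
    (rotateHead (1 : Fin p))^[n] = rotateHead (n : Fin p) := by
  induction n with
  | zero => funext ξ; simp
  | succ n ih =>
    funext ξ
    rw [Function.iterate_succ_apply', ih, rotateHead_rotateHead, Nat.cast_succ]

end Rays

section Descent

open Finset

variable {p : ℕ} {R : Type*} [CommRing R]

noncomputable def headSum (u : (ℕ → Fin p) →₀ R) : (ℕ → Fin p) →₀ R :=
  ∑ y : Fin p, u.comapDomain (rayCons y) (rayCons_injective2.right y).injOn

theorem headSum_apply (u : (ℕ → Fin p) →₀ R) (ρ : ℕ → Fin p) :
    headSum u ρ = ∑ y : Fin p, u (rayCons y ρ) := by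
  simp [headSum, Finsupp.finsetSum_apply]

/-- The equation `(1 + γ a_*) u = δ_{c c c …}`, read at the ray `γ ζ`. -/
def IsSpineSolution (c : Fin p) (γ : Equiv.Perm (ℕ → Fin p)) (u : (ℕ → Fin p) →₀ R) : Prop :=
  ∀ ζ, u (γ ζ) + headSum u (rayTail ζ) = Finsupp.single (Function.const ℕ c) 1 ζ

variable {c : Fin p} {γ : Equiv.Perm (ℕ → Fin p)} {m : Fin p → Fin p} {u : (ℕ → Fin p) →₀ R}

theorem IsSpineSolution.ne_zero [Nontrivial R] (hu : IsSpineSolution c γ u) : u ≠ 0 := by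
  rintro rfl
  simpa [headSum] using hu (Function.const ℕ c)

variable [NeZero p]

/-- The value `m c` plays no role; normalising it to `0` makes `m` a permutation of `Fin p`
exactly when the exponents `m y`, `y ≠ c`, run over the non-zero residues. -/
structure IsDirected (c : Fin p) (γ : Equiv.Perm (ℕ → Fin p)) (m : Fin p → Fin p) : Prop where
  apply_rayCons_self : ∀ ρ, γ (rayCons c ρ) = rayCons c (γ ρ)
  apply_rayCons_of_ne : ∀ y, y ≠ c → ∀ ρ, γ (rayCons y ρ) = rayCons y (rotateHead (m y) ρ)
  bijective : Function.Bijective m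
  map_self : m c = 0

theorem IsDirected.inv (hγ : IsDirected c γ m) : IsDirected c γ⁻¹ (fun y => -m y) where
  apply_rayCons_self ρ := by
    rw [Equiv.Perm.inv_eq_iff_eq, hγ.apply_rayCons_self]
    simp
  apply_rayCons_of_ne y hy ρ := by
    rw [Equiv.Perm.inv_eq_iff_eq, hγ.apply_rayCons_of_ne y hy, rotateHead_rotateHead_neg]
  bijective := (Equiv.neg (Fin p)).bijective.comp hγ.bijective
  map_self := by simp [hγ.map_self]

theorem IsDirected.apply_const (hγ : IsDirected c γ m) :
    γ (Function.const ℕ c) = Function.const ℕ c := by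
  have hrec : γ (Function.const ℕ c) = rayCons c (γ (Function.const ℕ c)) := by
    conv_lhs => rw [← rayCons_const c, hγ.apply_rayCons_self]
  funext n
  induction n with
  | zero => rw [hrec]; rfl
  | succ n ih => rw [hrec]; exact ih

theorem IsSpineSolution.apply_rayCons_of_ne (hγ : IsDirected c γ m) (hu : IsSpineSolution c γ u)
    {y : Fin p} (hy : y ≠ c) (ρ : ℕ → Fin p) :
    u (rayCons y (rotateHead (m y) ρ)) = -headSum u ρ := by
  have h := hu (rayCons y ρ)
  have hoff : rayCons y ρ ≠ Function.const ℕ c := fun h' => hy (congrFun h' 0)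
  rw [hγ.apply_rayCons_of_ne y hy, rayTail_rayCons, Finsupp.single_eq_of_ne hoff] at h
  exact eq_neg_of_add_eq_zero_left h

theorem IsSpineSolution.apply_rayCons_self (hγ : IsDirected c γ m)
    (hu : IsSpineSolution c γ u) (ρ : ℕ → Fin p) :
    u (rayCons c ρ) = Finsupp.single (Function.const ℕ c) 1 ρ - headSum u (γ⁻¹ ρ) := by
  have h := hu (rayCons c (γ⁻¹ ρ))
  have hδ : Finsupp.single (Function.const ℕ c) (1 : R) (rayCons c (γ⁻¹ ρ)) =
      Finsupp.single (Function.const ℕ c) 1 ρ := by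
    conv_lhs => rw [← rayCons_const c, Finsupp.single_apply_left (rayCons_injective2.right c),
      ← hγ.inv.apply_const, Finsupp.single_apply_left (Equiv.injective _)]
  rw [hγ.apply_rayCons_self, show γ (γ⁻¹ ρ) = ρ from γ.apply_symm_apply ρ, rayTail_rayCons,
    hδ] at h
  exact eq_sub_of_add_eq h

theorem IsSpineSolution.descend (hγ : IsDirected c γ m) (hu : IsSpineSolution c γ u) :
    IsSpineSolution c γ⁻¹ (headSum u) := by
  classical
  intro ρ
  have hsplit : headSum u ρ = u (rayCons c ρ) + ∑ y ∈ univ.erase c, u (rayCons y ρ) := by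
    rw [headSum_apply, ← add_sum_erase _ _ (mem_univ c)]
  have hoff : ∑ y ∈ univ.erase c, u (rayCons y ρ) =
      -∑ y ∈ univ.erase c, headSum u (rotateHead (-m y) ρ) := by
    rw [← sum_neg_distrib]
    refine sum_congr rfl fun y hy => ?_
    simpa [rotateHead_rotateHead_neg] using
      hu.apply_rayCons_of_ne hγ (ne_of_mem_erase hy) (rotateHead (-m y) ρ)
  have hreindex : ∑ y ∈ univ.erase c, headSum u (rotateHead (-m y) ρ) =
      ∑ z : Fin p, headSum u (rotateHead z ρ) - headSum u ρ := by
    rw [sum_erase_eq_sub (mem_univ c), hγ.map_self, neg_zero, rotateHead_zero,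
      hγ.inv.bijective.sum_comp (fun z => headSum u (rotateHead z ρ))]
  have hrot : ∑ z : Fin p, headSum u (rotateHead z ρ) = headSum (headSum u) (rayTail ρ) := by
    rw [headSum_apply]
    exact Equiv.sum_comp (Equiv.addLeft (ρ 0)) (fun y => headSum u (rayCons y (rayTail ρ)))
  linear_combination hsplit + hu.apply_rayCons_self hγ ρ + hoff - hreindex - hrot

theorem IsSpineSolution.card_support_headSum_le (hγ : IsDirected c γ m)
    (hu : IsSpineSolution c γ u) : (p - 1) * #(headSum u).support ≤ #u.support := by
  classical
  calc (p - 1) * #(headSum u).support = #(univ.erase c ×ˢ (headSum u).support) := by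
        simp [card_product, card_erase_of_mem]
    _ ≤ #u.support := by
        refine card_le_card_of_injOn (fun q => rayCons q.1 (rotateHead (m q.1) q.2))
          (fun q hq => ?_) (fun ⟨y, ρ⟩ _ ⟨y', ρ'⟩ _ hq => ?_)
        · simp only [coe_product, Set.mem_prod, mem_coe, mem_erase,
            Finsupp.mem_support_iff] at hq ⊢
          rw [hu.apply_rayCons_of_ne hγ hq.1.1]
          exact neg_ne_zero.mpr hq.2
        · obtain ⟨rfl, h⟩ := rayCons_injective2 hq
          exact congrArg _ (rotateHead_injective _ h)

theorem not_isSpineSolution [Nontrivial R] (hp : 2 < p) (hγ : IsDirected c γ m) :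
    ¬ IsSpineSolution c γ u := by
  intro hu
  induction h : #u.support using Nat.strong_induction_on generalizing γ m u with
  | _ n ih =>
    have hP := hu.descend hγ
    have hpos : 0 < #(headSum u).support :=
      card_pos.mpr (Finsupp.support_nonempty_iff.mpr hP.ne_zero)
    have hle := hu.card_support_headSum_le hγ
    have hlt : #(headSum u).support < n := by
      have : 2 * #(headSum u).support ≤ (p - 1) * #(headSum u).support :=
        Nat.mul_le_mul_right _ (by omega)
      omega
    exact ih _ hlt hγ.inv hP rfl

theorem geomSum_rotateHead_apply (v : (ℕ → Fin p) →₀ R) (ζ : ℕ → Fin p) :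
    ((∑ i ∈ range p, Finsupp.lmapDomain R R (rotateHead (1 : Fin p)) ^ i) v) ζ =
      headSum v (rayTail ζ) := by
  open Fin.NatCast in
  have hterm : ∀ i : ℕ, (Finsupp.lmapDomain R R (rotateHead (1 : Fin p)) ^ i) v ζ =
      v (rayCons (ζ 0 - i) (rayTail ζ)) := by
    intro i
    conv_lhs => rw [← rotateHead_rotateHead_neg (i : Fin p) ζ]
    rw [lmapDomain_pow, iterate_rotateHead_one, Finsupp.lmapDomain_apply,
      Finsupp.mapDomain_apply (rotateHead_injective _), rotateHead, sub_eq_add_neg]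
  simp only [LinearMap.sum_apply, Finsupp.finsetSum_apply, hterm]
  rw [← Fin.sum_univ_eq_sum_range (fun i => v (rayCons (ζ 0 - i) (rayTail ζ))), headSum_apply]
  simp only [Fin.cast_val_eq_self]
  exact Equiv.sum_comp (Equiv.subLeft (ζ 0)) (fun y => v (rayCons y (rayTail ζ)))

theorem not_isUnit_one_add_mul_geomSum [Nontrivial R] (hp : 2 < p) (hγ : IsDirected c γ m) :
    ¬ IsUnit (1 + Finsupp.lmapDomain R R γ *
      ∑ i ∈ range p, Finsupp.lmapDomain R R (rotateHead (1 : Fin p)) ^ i) := by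
  intro hX
  obtain ⟨v, hv⟩ := ((Module.End.isUnit_iff _).mp hX).2 (Finsupp.single (Function.const ℕ c) 1)
  refine not_isSpineSolution hp hγ (u := v) fun ζ => ?_
  have h := DFunLike.congr_fun hv (γ ζ)
  rwa [LinearMap.add_apply, Module.End.one_apply, Module.End.mul_apply, Finsupp.add_apply,
    Finsupp.lmapDomain_apply, Finsupp.mapDomain_apply γ.injective, geomSum_rotateHead_apply,
    ← hγ.apply_const, Finsupp.single_apply_left γ.injective] at h

end Descent

section BoundaryAction

variable {p : ℕ}

theorem toPerm_one : toPerm (fun _ : Vtx p => 1) = 1 := by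
  ext ω : 1
  induction ω with
  | nil => rfl
  | cons x ω ih => exact congrArg (x :: ·) ih

variable [NeZero p]

def boundaryPerm {g : Equiv.Perm (Vtx p)} (hg : g ∈ treeAut p) : Equiv.Perm (ℕ → Fin p) where
  toFun := bAct g
  invFun := bAct g⁻¹
  left_inv ξ := by
    rw [← Function.comp_apply (f := bAct g⁻¹), ← bAct_mul ((treeAut p).inv_mem hg) hg,
      inv_mul_cancel, bAct_one, id]
  right_inv ξ := by
    rw [← Function.comp_apply (f := bAct g), ← bAct_mul hg ((treeAut p).inv_mem hg),
      mul_inv_cancel, bAct_one, id]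

theorem bAct_toPerm_rayCons (φ : Vtx p → Equiv.Perm (Fin p)) (x : Fin p) (ρ : ℕ → Fin p) :
    bAct (toPerm φ) (rayCons x ρ) = rayCons (φ [] x) (bAct (toPerm fun τ => φ (x :: τ)) ρ) := by
  funext n
  cases n with
  | zero => rfl
  | succ n =>
    simp only [bAct, rayTake_rayCons]
    rfl

theorem bAct_toPerm_rooted (σ : Equiv.Perm (Fin p)) (ξ : ℕ → Fin p) :
    bAct (toPerm fun ω => if ω = [] then σ else 1) ξ = rayCons (σ (ξ 0)) (rayTail ξ) := by
  have h := bAct_toPerm_rayCons (fun ω => if ω = [] then σ else 1) (ξ 0) (rayTail ξ)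
  simpa [toPerm_one, bAct_one] using h

theorem bAct_aAut : bAct (aAut p) = rotateHead 1 :=
  funext (bAct_toPerm_rooted (rootCycle p))

open Fin.NatCast

theorem rootCycle_pow_apply (n : ℕ) (x : Fin p) : (rootCycle p ^ n) x = x + n := by
  induction n with
  | zero => simp
  | succ n ih =>
    rw [pow_succ', Equiv.Perm.mul_apply, ih]
    simp [rootCycle, add_assoc]

variable (hp1 : 1 < p) (c : Fin p) (e : Fin (p - 1) → ZMod p)

theorem dirAut_mem_treeAut : dirAut hp1 c e ∈ treeAut p :=
  toPerm_mem_treeAut _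

theorem bAct_dirAut_rayCons_self (ρ : ℕ → Fin p) :
    bAct (dirAut hp1 c e) (rayCons c ρ) = rayCons c (bAct (dirAut hp1 c e) ρ) := by
  rw [dirAut, bAct_toPerm_rayCons]
  congr 3
  funext τ
  cases τ <;> simp [dirPort]

theorem bAct_dirAut_rayCons_of_ne {x : Fin p} (hx : x ≠ c) (ρ : ℕ → Fin p) :
    bAct (dirAut hp1 c e) (rayCons x ρ) =
      rayCons x (rotateHead ((e (offIdx hp1 (x - c))).val : Fin p) ρ) := by
  have hsec : (fun τ => dirPort hp1 c e (x :: τ)) =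
      fun τ => if τ = [] then rootCycle p ^ (e (offIdx hp1 (x - c))).val else 1 := by
    funext τ
    cases τ <;> simp [dirPort, hx]
  rw [dirAut, bAct_toPerm_rayCons, hsec, bAct_toPerm_rooted, rootCycle_pow_apply]
  rfl

def dirExponent (y : Fin p) : Fin p :=
  if y = c then 0 else ((e (offIdx hp1 (y - c))).val : Fin p)

variable {e}

theorem dirExponent_surjective (he : ∀ z : ZMod p, z ≠ 0 → ∃ k, e k = z) :
    Function.Surjective (dirExponent hp1 c e) := by
  intro z
  rcases eq_or_ne z 0 with rfl | hz
  · exact ⟨c, if_pos rfl⟩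
  have hz' : ((z.val : ℕ) : ZMod p) ≠ 0 := by
    rw [Ne, ZMod.natCast_eq_zero_iff]
    exact fun hdvd => hz (Fin.ext (Nat.eq_zero_of_dvd_of_lt hdvd z.isLt))
  obtain ⟨k, hk⟩ := he _ hz'
  have hkp : k.val + 1 < p := by omega
  refine ⟨c + ⟨k.val + 1, hkp⟩, ?_⟩
  have hoff : offIdx hp1 (c + ⟨k.val + 1, hkp⟩ - c) = k := by
    rw [add_sub_cancel_left]; rfl
  have hne : c + ⟨k.val + 1, hkp⟩ ≠ c := by
    simp [Fin.ext_iff]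
  rw [dirExponent, if_neg hne, hoff, hk, ZMod.val_natCast_of_lt z.isLt, Fin.cast_val_eq_self]

theorem isDirected_dirAut (he : ∀ z : ZMod p, z ≠ 0 → ∃ k, e k = z) :
    IsDirected c (boundaryPerm (dirAut_mem_treeAut hp1 c e)) (dirExponent hp1 c e) where
  apply_rayCons_self := bAct_dirAut_rayCons_self hp1 c e
  apply_rayCons_of_ne y hy ρ := by
    rw [dirExponent, if_neg hy]
    exact bAct_dirAut_rayCons_of_ne hp1 c e hy ρ
  bijective := Finite.surjective_iff_bijective.mp (dirExponent_surjective hp1 c he)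
  map_self := if_pos rfl

end BoundaryAction

theorem coe_elt {p : ℕ} [NeZero p] {G : Subgroup (Equiv.Perm (Vtx p))} (hG : G ≤ treeAut p)
    (g : ↥G) :
    (elt p G hG g : BEnd p) =
      (Finsupp.lmapDomain (ZMod p) (ZMod p) (bAct (g : Equiv.Perm (Vtx p))) : BEnd p) :=
  MonoidAlgebra.lift_of _ _

theorem stmt17_general (p : ℕ) (hodd : Odd p) [Fact p.Prime] [NeZero p] (hp1 : 1 < p)
    (D : SpinalData p) (hr : D.r 0 ≠ 0)
    (hsurj : ∀ m : ZMod p, m ≠ 0 → ∃ k, D.e 0 ⟨0, Nat.pos_of_ne_zero hr⟩ k = m) :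
    ¬ IsUnit (1 +
      elt p (D.grp hp1) (grp_le_treeAut D hp1)
          ⟨D.gen hp1 0 ⟨0, Nat.pos_of_ne_zero hr⟩,
            gen_mem_grp D hp1 0 ⟨0, Nat.pos_of_ne_zero hr⟩⟩ *
        (elt p (D.grp hp1) (grp_le_treeAut D hp1)
          ⟨aAut p, aAut_mem_grp D hp1⟩ - 1) ^ (p - 1)) := by
  intro hU
  have hp2 : 2 < p := by
    have := (Fact.out : p.Prime).two_le
    obtain ⟨k, rfl⟩ := hodd
    omega
  have hX := hU.map (TEA p (D.grp hp1) (grp_le_treeAut D hp1)).val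
  simp only [map_add, map_one, map_mul, map_pow, map_sub, Subalgebra.coe_val] at hX
  rw [sub_one_pow_pred_eq_geom_sum, coe_elt, coe_elt, bAct_aAut] at hX
  exact not_isUnit_one_add_mul_geomSum hp2 (isDirected_dirAut hp1 (pathLetter 0) hsurj) hX

theorem stmt17 (p : ℕ) (hp : p.Prime) (hodd : Odd p) [Fact p.Prime] [NeZero p] (hp1 : 1 < p)
    (D : SpinalData p) (hji : JustInfinite (D.grp hp1)) (hr : D.r 0 ≠ 0)
    (hnz : ∀ k, D.e 0 ⟨0, Nat.pos_of_ne_zero hr⟩ k ≠ 0)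
    (hsurj : ∀ m : ZMod p, m ≠ 0 → ∃ k, D.e 0 ⟨0, Nat.pos_of_ne_zero hr⟩ k = m) :
    ¬ IsUnit (1 +
      elt p (D.grp hp1) (grp_le_treeAut D hp1)
          ⟨D.gen hp1 0 ⟨0, Nat.pos_of_ne_zero hr⟩,
            gen_mem_grp D hp1 0 ⟨0, Nat.pos_of_ne_zero hr⟩⟩ *
        (elt p (D.grp hp1) (grp_le_treeAut D hp1)
          ⟨aAut p, aAut_mem_grp D hp1⟩ - 1) ^ (p - 1)) :=
  stmt17_general p hodd hp1 D hr hsurj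

end GMS
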